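/- Let n ≥ 2 and ε > 0, and define ψ′ : {s ∈ ℝ^{n−1} : ‖s‖² > ε} × ℝ → ℝⁿ × ℝⁿ × ℝ (coordinates (x,y,z)) as follows: for 1 ≤ i ≤ n−1, the i-th coordinates are (xᵢ, yᵢ) = (sᵢ cos(πτ), −sᵢ sin(πτ)); the n-th coordinates are (xₙ, yₙ) = √((‖s‖² − ε)/2)·(cos(2πτ), sin(2πτ)); and z = επτ. Then the image of ψ′ is Legendrian for the standard contact form: for every (s,τ) with ‖s‖² > ε and every (v,σ) ∈ ℝ^{n−1} × ℝ, α_std(ψ′(s,τ))(Dψ′(s,τ)(v,σ)) = 0, where α_std(x,y,z)(ẋ,ẏ,ż) := ż + Σ_{i=1}^{n} (xᵢ ẏᵢ − yᵢ ẋᵢ). -/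

import Mathlib

/-!
In the `i`-th coordinate plane `ψ'` is in polar form `(rᵢ cos θᵢ, rᵢ sin θᵢ)`, and the pullback of
`xᵢ dyᵢ - yᵢ dxᵢ` by such a map is `rᵢ² dθᵢ`. The first `n - 1` planes have `rᵢ = sᵢ`, `θᵢ = -πτ`
and together contribute `-π‖s‖² dτ`; the last has `rₙ² = (‖s‖² - ε)/2`, `θₙ = 2πτ` and contributes
`π(‖s‖² - ε) dτ`; finally `dz = επ dτ` cancels the remaining `-επ dτ`.
-/

open Real

section

variable {E ι : Type*} [NormedAddCommGroup E] [NormedSpace ℝ E] [Fintype ι]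

theorem fderiv_euclidean_apply {f : E → EuclideanSpace ℝ ι} {p : E} (hf : DifferentiableAt ℝ f p)
    (w : E) (i : ι) : fderiv ℝ f p w i = fderiv ℝ (fun q => f q i) p w := by
  have h : HasFDerivAt (fun q => f q i) ((EuclideanSpace.proj i).comp (fderiv ℝ f p)) p :=
    (EuclideanSpace.proj (𝕜 := ℝ) (ι := ι) i).hasFDerivAt.comp p hf.hasFDerivAt
  rw [h.fderiv]
  rfl

theorem polar_x_dy_sub_y_dx {r θ : E → ℝ} {p : E} (hr : DifferentiableAt ℝ r p)
    (hθ : DifferentiableAt ℝ θ p) (w : E) :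
    r p * cos (θ p) * fderiv ℝ (fun q => r q * sin (θ q)) p w
      - r p * sin (θ p) * fderiv ℝ (fun q => r q * cos (θ q)) p w
      = r p ^ 2 * fderiv ℝ θ p w := by
  have hsin : HasFDerivAt (fun q => r q * sin (θ q)) _ p := hr.hasFDerivAt.mul hθ.hasFDerivAt.sin
  have hcos : HasFDerivAt (fun q => r q * cos (θ q)) _ p := hr.hasFDerivAt.mul hθ.hasFDerivAt.cos
  rw [hsin.fderiv, hcos.fderiv]
  simp only [add_apply, smul_apply, smul_eq_mul]
  linear_combination r p ^ 2 * fderiv ℝ θ p w * sin_sq_add_cos_sq (θ p)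

noncomputable def stdContactForm (P V : EuclideanSpace ℝ ι × EuclideanSpace ℝ ι × ℝ) : ℝ :=
  V.2.2 + ∑ i, (P.1 i * V.2.1 i - P.2.1 i * V.1 i)

noncomputable def polarMap (ρ θ : ι → E → ℝ) (z : E → ℝ) (q : E) :
    EuclideanSpace ℝ ι × EuclideanSpace ℝ ι × ℝ :=
  (WithLp.toLp 2 fun k => ρ k q * cos (θ k q), WithLp.toLp 2 fun k => ρ k q * sin (θ k q), z q)

theorem stdContactForm_fderiv_polarMap {ρ θ : ι → E → ℝ} {z : E → ℝ} {p : E}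
    (hρ : ∀ k, DifferentiableAt ℝ (ρ k) p) (hθ : ∀ k, DifferentiableAt ℝ (θ k) p)
    (hz : DifferentiableAt ℝ z p) (w : E) :
    stdContactForm (polarMap ρ θ z p) (fderiv ℝ (polarMap ρ θ z) p w)
      = fderiv ℝ z p w + ∑ k, ρ k p ^ 2 * fderiv ℝ (θ k) p w := by
  have hx : DifferentiableAt ℝ
      (fun q => WithLp.toLp 2 fun k => ρ k q * cos (θ k q) : E → EuclideanSpace ℝ ι) p :=
    differentiableAt_euclidean.2 fun k => (hρ k).mul (hθ k).cos
  have hy : DifferentiableAt ℝ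
      (fun q => WithLp.toLp 2 fun k => ρ k q * sin (θ k q) : E → EuclideanSpace ℝ ι) p :=
    differentiableAt_euclidean.2 fun k => (hρ k).mul (hθ k).sin
  rw [show polarMap ρ θ z = fun q => (_, _, z q) from rfl, hx.fderiv_prodMk (hy.prodMk hz),
    hy.fderiv_prodMk hz, stdContactForm]
  simp only [ContinuousLinearMap.prod_apply, fderiv_euclidean_apply hx, fderiv_euclidean_apply hy]
  congr 1
  exact Finset.sum_congr rfl fun k _ => polar_x_dy_sub_y_dx (hρ k) (hθ k) w

end

theorem fderiv_const_mul_snd {E : Type*} [NormedAddCommGroup E] [NormedSpace ℝ E] (c : ℝ)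
    (p w : E × ℝ) : fderiv ℝ (fun q : E × ℝ => c * q.2) p w = c * w.2 := by
  rw [(hasFDerivAt_snd.const_mul c).fderiv]
  simp

section

variable {m : ℕ}

noncomputable def navelRadius (ε : ℝ) : Fin (m + 1) → EuclideanSpace ℝ (Fin m) × ℝ → ℝ :=
  Fin.snoc (α := fun _ => EuclideanSpace ℝ (Fin m) × ℝ → ℝ) (fun i q => q.1 i)
    fun q => √((‖q.1‖ ^ 2 - ε) / 2)

noncomputable def navelAngle : Fin (m + 1) → EuclideanSpace ℝ (Fin m) × ℝ → ℝ :=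
  Fin.snoc (α := fun _ => EuclideanSpace ℝ (Fin m) × ℝ → ℝ) (fun _ q => -π * q.2)
    fun q => 2 * π * q.2

theorem differentiableAt_navelRadius {ε : ℝ} {p : EuclideanSpace ℝ (Fin m) × ℝ}
    (hp : ε < ‖p.1‖ ^ 2) (k : Fin (m + 1)) : DifferentiableAt ℝ (navelRadius ε k) p := by
  induction k using Fin.lastCases with
  | last =>
    simp only [navelRadius, Fin.snoc_last]
    have hnorm : DifferentiableAt ℝ (fun q : EuclideanSpace ℝ (Fin m) × ℝ => ‖q.1‖ ^ 2) p :=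
      (differentiableAt_id.norm_sq ℝ).comp p differentiableAt_fst
    exact DifferentiableAt.sqrt (by fun_prop) (by linarith)
  | cast i =>
    simp only [navelRadius, Fin.snoc_castSucc]
    fun_prop

theorem differentiableAt_navelAngle (k : Fin (m + 1)) (p : EuclideanSpace ℝ (Fin m) × ℝ) :
    DifferentiableAt ℝ (navelAngle k) p := by
  induction k using Fin.lastCases with
  | last => simp only [navelAngle, Fin.snoc_last]; fun_prop
  | cast i => simp only [navelAngle, Fin.snoc_castSucc]; fun_prop

end

theorem statement_16_general (m : ℕ) (ε : ℝ)
    (ψ : EuclideanSpace ℝ (Fin m) × ℝ →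
      EuclideanSpace ℝ (Fin (m + 1)) × EuclideanSpace ℝ (Fin (m + 1)) × ℝ)
    (hψx : ∀ (s : EuclideanSpace ℝ (Fin m)) (τ : ℝ) (i : Fin m),
      (ψ (s, τ)).1 (Fin.castSucc i) = s i * Real.cos (Real.pi * τ))
    (hψy : ∀ (s : EuclideanSpace ℝ (Fin m)) (τ : ℝ) (i : Fin m),
      (ψ (s, τ)).2.1 (Fin.castSucc i) = -(s i * Real.sin (Real.pi * τ)))
    (hψxn : ∀ (s : EuclideanSpace ℝ (Fin m)) (τ : ℝ),
      (ψ (s, τ)).1 (Fin.last m)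
        = Real.sqrt ((‖s‖ ^ 2 - ε) / 2) * Real.cos (2 * Real.pi * τ))
    (hψyn : ∀ (s : EuclideanSpace ℝ (Fin m)) (τ : ℝ),
      (ψ (s, τ)).2.1 (Fin.last m)
        = Real.sqrt ((‖s‖ ^ 2 - ε) / 2) * Real.sin (2 * Real.pi * τ))
    (hψz : ∀ (s : EuclideanSpace ℝ (Fin m)) (τ : ℝ),
      (ψ (s, τ)).2.2 = ε * Real.pi * τ) :
    ∀ (s : EuclideanSpace ℝ (Fin m)) (τ : ℝ), ‖s‖ ^ 2 > ε →
      ∀ (v : EuclideanSpace ℝ (Fin m)) (σ : ℝ),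
        (fderiv ℝ ψ (s, τ) (v, σ)).2.2
          + ∑ i : Fin (m + 1),
              ((ψ (s, τ)).1 i * (fderiv ℝ ψ (s, τ) (v, σ)).2.1 i
                - (ψ (s, τ)).2.1 i * (fderiv ℝ ψ (s, τ) (v, σ)).1 i) = 0 := by
  intro s τ hs v σ
  have hψ : ψ = polarMap (navelRadius ε) navelAngle fun q => ε * π * q.2 := by
    funext ⟨s, τ⟩
    refine Prod.ext (PiLp.ext fun k => ?_) (Prod.ext (PiLp.ext fun k => ?_) (hψz s τ))
    all_goals
      induction k using Fin.lastCases <;>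
        simp [polarMap, navelRadius, navelAngle, hψx, hψy, hψxn, hψyn]
  subst hψ
  change stdContactForm (polarMap _ _ _ (s, τ)) (fderiv ℝ (polarMap _ _ _) (s, τ) (v, σ)) = 0
  have hz : DifferentiableAt ℝ (fun q : EuclideanSpace ℝ (Fin m) × ℝ => ε * π * q.2) (s, τ) := by
    fun_prop
  have hρ := differentiableAt_navelRadius (p := (s, τ)) hs
  rw [stdContactForm_fderiv_polarMap hρ (fun k => differentiableAt_navelAngle k _) hz (v, σ),
    Fin.sum_univ_castSucc]
  simp only [navelRadius, navelAngle, Fin.snoc_castSucc, Fin.snoc_last, fderiv_const_mul_snd]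
  rw [Real.sq_sqrt (by linarith), EuclideanSpace.real_norm_sq_eq s, ← Finset.sum_mul]
  ring

/-- The smooth part of the boundary of the resolved navel of the bypass is Legendrian:
writing `n = m + 1` with `m ≥ 1` and fixing `ε > 0`, the map `ψ'(s,τ)` with coordinates
`(xᵢ, yᵢ) = (sᵢ cos(πτ), −sᵢ sin(πτ))` for `i < m`,
`(xₘ, yₘ) = √((‖s‖² − ε)/2)(cos(2πτ), sin(2πτ))` and `z = επτ` satisfies
`α_std(ψ'(s,τ))(Dψ'(s,τ)(v,σ)) = 0` whenever `‖s‖² > ε`, where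
`α_std(x,y,z)(ẋ,ẏ,ż) = ż + Σᵢ (xᵢẏᵢ − yᵢẋᵢ)`. -/
theorem statement_16 (m : ℕ) (hm : 1 ≤ m) (ε : ℝ) (hε : 0 < ε)
    (ψ : EuclideanSpace ℝ (Fin m) × ℝ →
      EuclideanSpace ℝ (Fin (m + 1)) × EuclideanSpace ℝ (Fin (m + 1)) × ℝ)
    (hψx : ∀ (s : EuclideanSpace ℝ (Fin m)) (τ : ℝ) (i : Fin m),
      (ψ (s, τ)).1 (Fin.castSucc i) = s i * Real.cos (Real.pi * τ))
    (hψy : ∀ (s : EuclideanSpace ℝ (Fin m)) (τ : ℝ) (i : Fin m),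
      (ψ (s, τ)).2.1 (Fin.castSucc i) = -(s i * Real.sin (Real.pi * τ)))
    (hψxn : ∀ (s : EuclideanSpace ℝ (Fin m)) (τ : ℝ),
      (ψ (s, τ)).1 (Fin.last m)
        = Real.sqrt ((‖s‖ ^ 2 - ε) / 2) * Real.cos (2 * Real.pi * τ))
    (hψyn : ∀ (s : EuclideanSpace ℝ (Fin m)) (τ : ℝ),
      (ψ (s, τ)).2.1 (Fin.last m)
        = Real.sqrt ((‖s‖ ^ 2 - ε) / 2) * Real.sin (2 * Real.pi * τ))
    (hψz : ∀ (s : EuclideanSpace ℝ (Fin m)) (τ : ℝ),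
      (ψ (s, τ)).2.2 = ε * Real.pi * τ) :
    ∀ (s : EuclideanSpace ℝ (Fin m)) (τ : ℝ), ‖s‖ ^ 2 > ε →
      ∀ (v : EuclideanSpace ℝ (Fin m)) (σ : ℝ),
        (fderiv ℝ ψ (s, τ) (v, σ)).2.2
          + ∑ i : Fin (m + 1),
              ((ψ (s, τ)).1 i * (fderiv ℝ ψ (s, τ) (v, σ)).2.1 i
                - (ψ (s, τ)).2.1 i * (fderiv ℝ ψ (s, τ) (v, σ)).1 i) = 0 :=
  statement_16_general m ε ψ hψx hψy hψxn hψyn hψz
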